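/- arXiv:0906.3143 — 2 statements merged into one kernel-verified Lean document; each statement's English description precedes it below -/
import Mathlib

section
/- Let f(t) = e^t - e^{-2t} and let u : ℂ → ℝ be a smooth solution of ∂²u/∂z∂z̄ = -f(u) (a form of the Tzitzeica equation). Writing u_j = ∂^{j+1}u/∂z^{j+1}, the function P = u_4 + 5u_2u_1 - 5u_2u_0² - 5u_1²u_0 + u_0⁵ satisfies the linearized equation ∂²P/∂z∂z̄ + f'(u)·P = 0. -/
open Complex

/-- The Wirtinger derivative ∂/∂z of a function F : ℂ → ℂ. -/
noncomputable def wdz (F : ℂ → ℂ) (z : ℂ) : ℂ :=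
  (fderiv ℝ F z 1 - Complex.I * fderiv ℝ F z Complex.I) / 2

/-- The Wirtinger derivative ∂/∂z̄ of a function F : ℂ → ℂ. -/
noncomputable def wdzb (F : ℂ → ℂ) (z : ℂ) : ℂ :=
  (fderiv ℝ F z 1 + Complex.I * fderiv ℝ F z Complex.I) / 2

/-- u_j = ∂^{j+1} u / ∂z^{j+1}. -/
noncomputable def uj (u : ℂ → ℝ) (j : ℕ) : ℂ → ℂ :=
  wdz^[j + 1] (fun w => (u w : ℂ))

/-- The Tzitzeica potential f(t) = e^t - e^{-2t}. -/
noncomputable def tzf : ℝ → ℝ := fun t => Real.exp t - Real.exp (-(2 * t))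

lemma wdz_add {F G : ℂ → ℂ} {z : ℂ} (hF : DifferentiableAt ℝ F z) (hG : DifferentiableAt ℝ G z) :
    wdz (fun w => F w + G w) z = wdz F z + wdz G z := by
  simp [wdz, fderiv_fun_add hF hG]; ring

lemma wdz_sub {F G : ℂ → ℂ} {z : ℂ} (hF : DifferentiableAt ℝ F z) (hG : DifferentiableAt ℝ G z) :
    wdz (fun w => F w - G w) z = wdz F z - wdz G z := by
  simp [wdz, fderiv_fun_sub hF hG]; ring

lemma wdz_mul {F G : ℂ → ℂ} {z : ℂ} (hF : DifferentiableAt ℝ F z) (hG : DifferentiableAt ℝ G z) :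
    wdz (fun w => F w * G w) z = wdz F z * G z + F z * wdz G z := by
  simp [wdz, fderiv_fun_mul hF hG, smul_eq_mul]; ring

lemma wdz_const_mul {F : ℂ → ℂ} {z : ℂ} (c : ℂ) (hF : DifferentiableAt ℝ F z) :
    wdz (fun w => c * F w) z = c * wdz F z := by
  simp [wdz, fderiv_const_mul hF c, smul_eq_mul]; ring

lemma wdz_const (c z : ℂ) : wdz (fun _ => c) z = 0 := by
  simp [wdz]

lemma wdzb_add {F G : ℂ → ℂ} {z : ℂ} (hF : DifferentiableAt ℝ F z) (hG : DifferentiableAt ℝ G z) :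
    wdzb (fun w => F w + G w) z = wdzb F z + wdzb G z := by
  simp [wdzb, fderiv_fun_add hF hG]; ring

lemma wdzb_sub {F G : ℂ → ℂ} {z : ℂ} (hF : DifferentiableAt ℝ F z) (hG : DifferentiableAt ℝ G z) :
    wdzb (fun w => F w - G w) z = wdzb F z - wdzb G z := by
  simp [wdzb, fderiv_fun_sub hF hG]; ring

lemma wdzb_mul {F G : ℂ → ℂ} {z : ℂ} (hF : DifferentiableAt ℝ F z) (hG : DifferentiableAt ℝ G z) :
    wdzb (fun w => F w * G w) z = wdzb F z * G z + F z * wdzb G z := by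
  simp [wdzb, fderiv_fun_mul hF hG, smul_eq_mul]; ring

lemma wdzb_const_mul {F : ℂ → ℂ} {z : ℂ} (c : ℂ) (hF : DifferentiableAt ℝ F z) :
    wdzb (fun w => c * F w) z = c * wdzb F z := by
  simp [wdzb, fderiv_const_mul hF c, smul_eq_mul]; ring

lemma wdzb_const (c z : ℂ) : wdzb (fun _ => c) z = 0 := by
  simp [wdzb]

lemma contDiff_apply_fderiv {F : ℂ → ℂ} (hF : ContDiff ℝ (⊤:ℕ∞) F) (v : ℂ) :
    ContDiff ℝ (⊤:ℕ∞) (fun z => fderiv ℝ F z v) := by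
  have h1 : ContDiff ℝ (⊤:ℕ∞) (fderiv ℝ F) := hF.fderiv_right (by exact_mod_cast le_top)
  exact (ContinuousLinearMap.apply ℝ ℂ v).contDiff.comp h1

lemma wdz_contDiff {F : ℂ → ℂ} (hF : ContDiff ℝ (⊤:ℕ∞) F) : ContDiff ℝ (⊤:ℕ∞) (wdz F) := by
  unfold wdz
  exact ((contDiff_apply_fderiv hF 1).sub
    ((contDiff_const).mul (contDiff_apply_fderiv hF I))).div_const 2

lemma wdzb_contDiff {F : ℂ → ℂ} (hF : ContDiff ℝ (⊤:ℕ∞) F) : ContDiff ℝ (⊤:ℕ∞) (wdzb F) := by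
  unfold wdzb
  exact ((contDiff_apply_fderiv hF 1).add
    ((contDiff_const).mul (contDiff_apply_fderiv hF I))).div_const 2

lemma fderiv_symm {F : ℂ → ℂ} (hF : ContDiff ℝ (⊤:ℕ∞) F) (z v w : ℂ) :
    fderiv ℝ (fun y => fderiv ℝ F y v) z w = fderiv ℝ (fun y => fderiv ℝ F y w) z v := by
  have hd : ContDiff ℝ (⊤:ℕ∞) (fderiv ℝ F) := hF.fderiv_right (by exact_mod_cast le_top)
  have h1 : ∀ y, HasFDerivAt F (fderiv ℝ F y) y := fun y =>
    (hF.differentiable (by simp) y).hasFDerivAt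
  have h2 : HasFDerivAt (fderiv ℝ F) (fderiv ℝ (fderiv ℝ F) z) z :=
    (hd.differentiable (by simp) z).hasFDerivAt
  have hsymm := second_derivative_symmetric h1 h2 v w
  have e : ∀ a, fderiv ℝ (fun y => fderiv ℝ F y a) z = ((fderiv ℝ (fderiv ℝ F) z).flip a) := by
    intro a
    have : (fun y => fderiv ℝ F y a) = (ContinuousLinearMap.apply ℝ ℂ a) ∘ (fderiv ℝ F) := rfl
    rw [this, fderiv_comp z ((ContinuousLinearMap.apply ℝ ℂ a).differentiableAt)
      (hd.differentiable (by simp) z)]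
    ext w'
    simp
  rw [e v, e w]
  simpa using hsymm.symm

lemma wdz_wdzb_comm {F : ℂ → ℂ} (hF : ContDiff ℝ (⊤:ℕ∞) F) :
    wdzb (wdz F) = wdz (wdzb F) := by
  funext z
  have hd : ∀ v, DifferentiableAt ℝ (fun y => fderiv ℝ F y v) z := fun v =>
    (contDiff_apply_fderiv hF v).differentiable (by simp) z
  have key : ∀ v, fderiv ℝ (wdz F) z v =
      (fderiv ℝ (fun y => fderiv ℝ F y 1) z v
        - I * fderiv ℝ (fun y => fderiv ℝ F y I) z v) / 2 := by
    intro v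
    unfold wdz
    rw [show (fun z => (fderiv ℝ F z 1 - Complex.I * fderiv ℝ F z Complex.I) / 2)
        = (fun z => (fderiv ℝ F z 1 - Complex.I * fderiv ℝ F z Complex.I) * (2:ℂ)⁻¹) by
      funext y; rw [div_eq_mul_inv]]
    rw [fderiv_mul_const (c := fun y => fderiv ℝ F y 1 - I * fderiv ℝ F y I)
      ((hd 1).sub ((hd I).const_mul I)), fderiv_fun_sub (hd 1) ((hd I).const_mul I),
      fderiv_const_mul (hd I) I]
    simp [smul_eq_mul, div_eq_mul_inv]
    ring
  have keyb : ∀ v, fderiv ℝ (wdzb F) z v =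
      (fderiv ℝ (fun y => fderiv ℝ F y 1) z v
        + I * fderiv ℝ (fun y => fderiv ℝ F y I) z v) / 2 := by
    intro v
    unfold wdzb
    rw [show (fun z => (fderiv ℝ F z 1 + Complex.I * fderiv ℝ F z Complex.I) / 2)
        = (fun z => (fderiv ℝ F z 1 + Complex.I * fderiv ℝ F z Complex.I) * (2:ℂ)⁻¹) by
      funext y; rw [div_eq_mul_inv]]
    rw [fderiv_mul_const (c := fun y => fderiv ℝ F y 1 + I * fderiv ℝ F y I)
      ((hd 1).add ((hd I).const_mul I)), fderiv_fun_add (hd 1) ((hd I).const_mul I),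
      fderiv_const_mul (hd I) I]
    simp [smul_eq_mul, div_eq_mul_inv]
    ring
  have hs := fderiv_symm hF z 1 I
  simp only [wdz, wdzb] at key keyb ⊢
  rw [key 1, key I, keyb 1, keyb I, hs]
  ring

lemma wdz_cexp {F : ℂ → ℂ} {z : ℂ} (hF : DifferentiableAt ℝ F z) :
    wdz (fun w => Complex.exp (F w)) z = Complex.exp (F z) * wdz F z := by
  have h : HasFDerivAt (fun w => Complex.exp (F w))
      (Complex.exp (F z) • (fderiv ℝ F z)) z := by
    have he := (Complex.hasDerivAt_exp (F z)).hasFDerivAt.restrictScalars ℝ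
    have := he.comp z hF.hasFDerivAt
    refine this.congr_fderiv ?_
    ext w
    simp [smul_eq_mul, mul_comm]
  rw [wdz, wdz, h.fderiv]
  simp [smul_eq_mul]
  ring

lemma tzf_deriv (t : ℝ) : deriv tzf t = Real.exp t + 2 * Real.exp (-(2 * t)) := by
  have h2 : HasDerivAt (fun t : ℝ => -(2 * t)) (-2) t := by
    simpa using ((hasDerivAt_id t).const_mul (2:ℝ)).fun_neg
  have h3 : HasDerivAt (fun t : ℝ => Real.exp (-(2 * t))) (Real.exp (-(2 * t)) * (-2)) t :=
    (Real.hasDerivAt_exp _).comp t h2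
  have h : HasDerivAt tzf (Real.exp t - Real.exp (-(2 * t)) * (-2)) t :=
    (Real.hasDerivAt_exp t).sub h3
  rw [h.deriv]; ring

set_option maxHeartbeats 2000000 in
/-- For the Tzitzeica equation u_{zz̄} = -(e^u - e^{-2u}), the degree-5 generating
function P = u₄ + 5u₂u₁ - 5u₂u₀² - 5u₁²u₀ + u₀⁵ satisfies P_{zz̄} + f'(u)·P = 0. -/
theorem stmt4 (u : ℂ → ℝ) (hu : ContDiff ℝ (⊤ : ℕ∞) u)
    (hpde : ∀ z, wdzb (wdz (fun w => (u w : ℂ))) z = -(tzf (u z) : ℂ)) :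
    ∀ z, wdzb (wdz (fun w =>
        uj u 4 w + 5 * uj u 2 w * uj u 1 w - 5 * uj u 2 w * (uj u 0 w) ^ 2
          - 5 * (uj u 1 w) ^ 2 * uj u 0 w + (uj u 0 w) ^ 5)) z
      + (Complex.ofReal (deriv tzf (u z)))
          * (uj u 4 z + 5 * uj u 2 z * uj u 1 z - 5 * uj u 2 z * (uj u 0 z) ^ 2
              - 5 * (uj u 1 z) ^ 2 * uj u 0 z + (uj u 0 z) ^ 5) = 0 := by
  intro z
  have hu' : ContDiff ℝ (⊤:ℕ∞) u := hu.of_le (by simp)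
  set U : ℂ → ℂ := fun w => ((u w : ℂ)) with hU
  have hcU : ContDiff ℝ (⊤:ℕ∞) U := Complex.ofRealCLM.contDiff.comp hu'
  set v1 : ℂ → ℂ := wdz U with hv1
  set v2 : ℂ → ℂ := wdz v1 with hv2
  set v3 : ℂ → ℂ := wdz v2 with hv3
  set v4 : ℂ → ℂ := wdz v3 with hv4
  set v5 : ℂ → ℂ := wdz v4 with hv5
  set v6 : ℂ → ℂ := wdz v5 with hv6
  have hc1 : ContDiff ℝ (⊤:ℕ∞) v1 := wdz_contDiff hcU
  have hc2 : ContDiff ℝ (⊤:ℕ∞) v2 := wdz_contDiff hc1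
  have hc3 : ContDiff ℝ (⊤:ℕ∞) v3 := wdz_contDiff hc2
  have hc4 : ContDiff ℝ (⊤:ℕ∞) v4 := wdz_contDiff hc3
  have hc5 : ContDiff ℝ (⊤:ℕ∞) v5 := wdz_contDiff hc4
  have hc6 : ContDiff ℝ (⊤:ℕ∞) v6 := wdz_contDiff hc5
  have hdU : Differentiable ℝ U := hcU.differentiable (by simp)
  have hd1 : Differentiable ℝ v1 := hc1.differentiable (by simp)
  have hd2 : Differentiable ℝ v2 := hc2.differentiable (by simp)
  have hd3 : Differentiable ℝ v3 := hc3.differentiable (by simp)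
  have hd4 : Differentiable ℝ v4 := hc4.differentiable (by simp)
  have hd5 : Differentiable ℝ v5 := hc5.differentiable (by simp)
  have hd6 : Differentiable ℝ v6 := hc6.differentiable (by simp)
  -- uj in terms of v
  have e0 : uj u 0 = v1 := by
    show wdz^[1] U = v1
    simp [Function.iterate_one, hv1]
  have e1 : uj u 1 = v2 := by
    show wdz^[2] U = v2
    rw [hv2, hv1]
    simp [Function.iterate_succ', Function.iterate_one]
  have e2 : uj u 2 = v3 := by
    show wdz^[3] U = v3
    rw [hv3, hv2, hv1]
    simp only [Function.iterate_succ', Function.iterate_zero, Function.comp_apply,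
      Function.comp, id]
  have e4 : uj u 4 = v5 := by
    show wdz^[5] U = v5
    rw [hv5, hv4, hv3, hv2, hv1]
    simp only [Function.iterate_succ', Function.iterate_zero, Function.comp_apply,
      Function.comp, id]
  -- exponentials
  set A : ℂ → ℂ := fun w => Complex.exp (U w) with hA
  set B : ℂ → ℂ := fun w => Complex.exp ((-2 : ℂ) * U w) with hB
  have hdA : Differentiable ℝ A := fun w =>
    ((Complex.differentiable_exp (𝕜 := ℂ)).restrictScalars ℝ (U w)).comp w (hdU w)
  have hdB : Differentiable ℝ B := fun w =>
    ((Complex.differentiable_exp (𝕜 := ℂ)).restrictScalars ℝ _).comp w ((hdU.const_mul _) w)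
  have hwA : ∀ w, wdz A w = A w * v1 w := by
    intro w
    rw [hA, wdz_cexp (hdU w), hv1]
  have hwB : ∀ w, wdz B w = -2 * B w * v1 w := by
    intro w
    rw [hB]
    rw [wdz_cexp ((hdU.const_mul _) w), wdz_const_mul _ (hdU w)]
    rw [hv1]; ring
  -- PDE in these terms
  have Hb1 : wdzb v1 = fun w => B w - A w := by
    funext w
    rw [hpde w, hA, hB]
    simp only [tzf, Complex.ofReal_sub, Complex.ofReal_exp]
    simp only [hU]
    push_cast
    ring_nf
  have Hb2 : wdzb v2 = fun w => -2 * B w * v1 w - A w * v1 w := by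
    rw [hv2, wdz_wdzb_comm hc1, Hb1]
    funext w
    simp (disch := fun_prop) only [wdz_add, wdz_sub, wdz_mul, wdz_const_mul, wdz_const]
    simp only [hwA, hwB, ← hv2]
    try ring
  have Hb3 : wdzb v3 = fun w => 4 * B w * v1 w * v1 w - A w * v1 w * v1 w
      - 2 * B w * v2 w - A w * v2 w := by
    rw [hv3, wdz_wdzb_comm hc2, Hb2]
    funext w
    simp (disch := fun_prop) only [wdz_add, wdz_sub, wdz_mul, wdz_const_mul, wdz_const]
    simp only [hwA, hwB, ← hv2, ← hv3]
    ring
  have Hb4 : wdzb v4 = fun w => -8 * B w * v1 w * v1 w * v1 w - A w * v1 w * v1 w * v1 w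
      + 12 * B w * v1 w * v2 w - 3 * A w * v1 w * v2 w - 2 * B w * v3 w - A w * v3 w := by
    rw [hv4, wdz_wdzb_comm hc3, Hb3]
    funext w
    simp (disch := fun_prop) only [wdz_add, wdz_sub, wdz_mul, wdz_const_mul, wdz_const]
    simp only [hwA, hwB, ← hv2, ← hv3, ← hv4]
    ring
  have Hb5 : wdzb v5 = fun w => 16 * B w * v1 w * v1 w * v1 w * v1 w
      - A w * v1 w * v1 w * v1 w * v1 w - 48 * B w * v1 w * v1 w * v2 w
      - 6 * A w * v1 w * v1 w * v2 w + 12 * B w * v2 w * v2 w - 3 * A w * v2 w * v2 w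
      + 16 * B w * v1 w * v3 w - 4 * A w * v1 w * v3 w - 2 * B w * v4 w - A w * v4 w := by
    rw [hv5, wdz_wdzb_comm hc4, Hb4]
    funext w
    simp (disch := fun_prop) only [wdz_add, wdz_sub, wdz_mul, wdz_const_mul, wdz_const]
    simp only [hwA, hwB, ← hv2, ← hv3, ← hv4, ← hv5]
    ring
  have Hb6 : wdzb v6 = fun w => -32 * B w * v1 w * v1 w * v1 w * v1 w * v1 w
      - A w * v1 w * v1 w * v1 w * v1 w * v1 w
      + 160 * B w * v1 w * v1 w * v1 w * v2 w - 10 * A w * v1 w * v1 w * v1 w * v2 w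
      - 120 * B w * v1 w * v2 w * v2 w - 15 * A w * v1 w * v2 w * v2 w
      - 80 * B w * v1 w * v1 w * v3 w - 10 * A w * v1 w * v1 w * v3 w
      + 40 * B w * v2 w * v3 w - 10 * A w * v2 w * v3 w
      + 20 * B w * v1 w * v4 w - 5 * A w * v1 w * v4 w - 2 * B w * v5 w - A w * v5 w := by
    rw [hv6, wdz_wdzb_comm hc5, Hb5]
    funext w
    simp (disch := fun_prop) only [wdz_add, wdz_sub, wdz_mul, wdz_const_mul, wdz_const]
    simp only [hwA, hwB, ← hv2, ← hv3, ← hv4, ← hv5, ← hv6]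
    ring
  -- the generating function
  have hPfun : (fun w =>
        uj u 4 w + 5 * uj u 2 w * uj u 1 w - 5 * uj u 2 w * (uj u 0 w) ^ 2
          - 5 * (uj u 1 w) ^ 2 * uj u 0 w + (uj u 0 w) ^ 5)
      = fun w => v5 w + 5 * (v3 w * v2 w) - 5 * (v3 w * (v1 w * v1 w))
          - 5 * (v2 w * v2 w * v1 w) + v1 w * v1 w * v1 w * v1 w * v1 w := by
    funext w
    rw [e0, e1, e2, e4]
    ring
  have hQ : wdz (fun w => v5 w + 5 * (v3 w * v2 w) - 5 * (v3 w * (v1 w * v1 w))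
          - 5 * (v2 w * v2 w * v1 w) + v1 w * v1 w * v1 w * v1 w * v1 w)
      = fun w => v6 w + 5 * v4 w * v2 w + 5 * v3 w * v3 w - 5 * v4 w * v1 w * v1 w
          - 20 * v3 w * v2 w * v1 w - 5 * v2 w * v2 w * v2 w
          + 5 * v1 w * v1 w * v1 w * v1 w * v2 w := by
    funext w
    simp (disch := fun_prop) only [wdz_add, wdz_sub, wdz_mul, wdz_const_mul, wdz_const]
    simp only [← hv2, ← hv3, ← hv4, ← hv5, ← hv6]
    ring
  have hfd : (Complex.ofReal (deriv tzf (u z)) : ℂ) = A z + 2 * B z := by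
    rw [tzf_deriv, hA, hB]
    push_cast
    simp only [hU, neg_mul]
  rw [hPfun, hQ, e0, e1, e2, e4, hfd]
  simp (disch := fun_prop) only [wdzb_add, wdzb_sub, wdzb_mul, wdzb_const_mul, wdzb_const]
  simp only [Hb1, Hb2, Hb3, Hb4, Hb5, Hb6]
  ring
end

section
/- Assign weighted degrees wd(u_j) = j+1 to the variables u_j. Let f : ℝ → ℝ be smooth with f, f', f'' linearly independent over ℝ, and let d ≥ 2. Then there is no weighted-homogeneous polynomial P ∈ ℝ[u_0, ..., u_{d-1}] of weighted degree d, normalized so that the coefficient of u_{d-1} equals 1, satisfying the equation Σ_{j≥0} T^j·∂/∂u_j (Σ_{i≥0} u_{i+1}·P_{u_i}) = f'(u)·P, where T^j = (e_{-1})^j f with e_{-1} = u_0∂_u + Σ u_{i+1}∂_{u_i}. -/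
open MvPolynomial

/-- The coefficient ring C^∞-functions of u (modelled as all functions ℝ → ℝ,
with the relevant functions required smooth in the hypotheses). -/
abbrev SF : Type := ℝ → ℝ

/-- The ring R = C^∞(ℝ)[u₀, u₁, u₂, ...]: polynomials in the formal variables
u_j (j : ℕ) with function coefficients. -/
abbrev RR : Type := MvPolynomial ℕ SF

/-- The operator ∂/∂u, differentiating the coefficient functions. -/
noncomputable def du (p : RR) : RR :=
  ∑ m ∈ p.support, monomial m (deriv (MvPolynomial.coeff m p))

/-- The total derivative e₋₁ = u₀·∂/∂u + Σ_i u_{i+1}·∂/∂u_i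
(a finite sum on any polynomial). -/
noncomputable def eneg1 (p : RR) : RR :=
  X 0 * du p + ∑ i ∈ p.vars, X (i + 1) * pderiv i p

/-- T^j = (e₋₁)^j f. -/
noncomputable def Tf (f : SF) (j : ℕ) : RR := eneg1^[j] (MvPolynomial.C f)

/-- The recursively defined T^i: T⁰ = f, T^{i+1} = Σ_{j=0}^{i} C(i,j)·u_{i-j}·(T^j)_u. -/
noncomputable def Trec (f : SF) : ℕ → RR
  | 0 => MvPolynomial.C f
  | (i + 1) => ∑ j ∈ (Finset.range (i + 1)).attach,
      (Nat.choose i j.1 : RR) * (X (i - j.1) * du (Trec f j.1))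
  decreasing_by exact Finset.mem_range.mp j.2

/-- The operator Σ_{j≥0} T^j·∂/∂u_j = f·∂/∂u₀ + Σ_{j≥1} T^j·∂/∂u_j
(equal to -e_{-̄1} on polynomials in the u_j). -/
noncomputable def Ebar (f : SF) (p : RR) : RR :=
  ∑ j ∈ p.vars, Tf f j * pderiv j p

/-- Inclusion of ℝ[u₀, u₁, ...] (constant coefficients) into R. -/
noncomputable def constLift : MvPolynomial ℕ ℝ →+* RR :=
  MvPolynomial.map (algebraMap ℝ SF)

/-- Weighted degree of a monomial, determined by wd(u_j) = j + 1. -/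
def wdeg (m : ℕ →₀ ℕ) : ℕ := m.sum fun j e => e * (j + 1)

/-- The constant polynomial with constant value r. -/
noncomputable def Cc (r : ℝ) : RR := MvPolynomial.C (fun _ : ℝ => r)

-- ## basic helper lemmas

lemma deriv_zero_fun : deriv (0 : SF) = 0 := by
  funext x
  show deriv (fun _ => (0:ℝ)) x = 0
  simp

lemma mul_algebraMap (g : SF) (r : ℝ) : g * (algebraMap ℝ SF) r = r • g := by
  funext x
  simp [Algebra.smul_def, mul_comm]

lemma wdeg_add (a b : ℕ →₀ ℕ) : wdeg (a + b) = wdeg a + wdeg b :=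
  Finsupp.sum_add_index' (fun _ => by simp) (fun j e1 e2 => add_mul e1 e2 (j+1))

lemma wdeg_single (i k : ℕ) : wdeg (Finsupp.single i k) = k * (i + 1) :=
  Finsupp.sum_single_index (by simp)

lemma le_wdeg {m : ℕ →₀ ℕ} {i : ℕ} (h : m i ≠ 0) : i + 1 ≤ wdeg m := by
  classical
  have hi : i ∈ m.support := Finsupp.mem_support_iff.mpr h
  calc i + 1 ≤ m i * (i + 1) := by
        have := Nat.one_le_iff_ne_zero.mpr h; nlinarith
    _ ≤ ∑ j ∈ m.support, m j * (j + 1) :=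
        Finset.single_le_sum (f := fun j => m j * (j + 1)) (fun j _ => Nat.zero_le _) hi
    _ = wdeg m := rfl

lemma wdeg_zero : wdeg 0 = 0 := by simp [wdeg]

lemma wdeg_sub_add {m : ℕ →₀ ℕ} {i : ℕ} (h : m i ≠ 0) :
    wdeg (m - Finsupp.single i 1) + (i + 1) = wdeg m := by
  have hle : Finsupp.single i 1 ≤ m := Finsupp.single_le_iff.mpr (by omega)
  conv_rhs => rw [← tsub_add_cancel_of_le hle]
  rw [wdeg_add, wdeg_single, one_mul]

lemma coeff_pderiv {R : Type*} [CommSemiring R] (p : MvPolynomial ℕ R) (i : ℕ) (m : ℕ →₀ ℕ) :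
    coeff m (pderiv i p) = (m i + 1) • coeff (m + Finsupp.single i 1) p := by
  induction p using MvPolynomial.induction_on' with
  | add p q hp hq => simp [hp, hq]
  | monomial s a =>
    rw [pderiv_monomial, coeff_monomial, coeff_monomial]
    by_cases h : s = m + Finsupp.single i 1
    · subst h
      rw [if_pos (add_tsub_cancel_right m (Finsupp.single i 1))]
      have : ((m + Finsupp.single i 1) : ℕ →₀ ℕ) i = m i + 1 := by
        simp [Finsupp.add_apply, Finsupp.single_apply]
      rw [this, nsmul_eq_mul]
      simp only [if_true]
      push_cast
      ring
    · rw [if_neg h]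
      by_cases h2 : s - Finsupp.single i 1 = m
      · rw [if_pos h2]
        by_cases h3 : s i = 0
        · simp [h3]
        · exfalso
          apply h
          rw [← h2, tsub_add_cancel_of_le (Finsupp.single_le_iff.mpr (by omega))]
      · rw [if_neg h2, smul_zero]

lemma coeff_du (m : ℕ →₀ ℕ) (p : RR) : coeff m (du p) = deriv (coeff m p) := by
  classical
  rw [du, coeff_sum]
  simp only [coeff_monomial]
  rw [Finset.sum_ite_eq' p.support m (fun m' => deriv (coeff m' p))]
  split_ifs with h
  · rfl
  · rw [MvPolynomial.notMem_support_iff.mp h, deriv_zero_fun]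

lemma eneg1_eq (p : RR) (N : ℕ) (h : p.vars ⊆ Finset.range N) :
    eneg1 p = X 0 * du p + ∑ i ∈ Finset.range N, X (i + 1) * pderiv i p := by
  rw [eneg1]
  congr 1
  exact Finset.sum_subset h (fun i _ hi => by
    rw [pderiv_eq_zero_of_notMem_vars hi, mul_zero])

lemma coeff_eneg1 (p : RR) (N : ℕ) (h : p.vars ⊆ Finset.range N) (m : ℕ →₀ ℕ) :
    coeff m (eneg1 p) =
      (if 0 ∈ m.support then deriv (coeff (m - Finsupp.single 0 1) p) else 0) +
      ∑ i ∈ Finset.range N, (if (i + 1) ∈ m.support then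
        (((m - Finsupp.single (i+1) 1) : ℕ →₀ ℕ) i + 1) •
          coeff (m - Finsupp.single (i+1) 1 + Finsupp.single i 1) p else 0) := by
  classical
  rw [eneg1_eq p N h, coeff_add, coeff_sum]
  congr 1
  · rw [coeff_X_mul']
    split_ifs with h0
    · rw [coeff_du]
    · rfl
  · refine Finset.sum_congr rfl (fun i _ => ?_)
    rw [coeff_X_mul']
    split_ifs with h0
    · rw [_root_.coeff_pderiv]
    · rfl

-- ## homogeneity

lemma varsBound {p : RR} {n : ℕ} (h : ∀ m, wdeg m ≠ n → coeff m p = 0) :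
    p.vars ⊆ Finset.range n := by
  intro i hi
  rw [mem_vars] at hi
  obtain ⟨m, hm, him⟩ := hi
  rw [MvPolynomial.mem_support_iff] at hm
  have hw : wdeg m = n := by
    by_contra h'
    exact hm (h _ h')
  have h2 : i + 1 ≤ wdeg m := le_wdeg (Finsupp.mem_support_iff.mp him)
  exact Finset.mem_range.mpr (by omega)

lemma eneg1_hom {p : RR} {n : ℕ} (h : ∀ m, wdeg m ≠ n → coeff m p = 0) :
    ∀ m, wdeg m ≠ n + 1 → coeff m (eneg1 p) = 0 := by
  intro m hm
  rw [coeff_eneg1 p n (varsBound h) m]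
  have h1 : (if 0 ∈ m.support then deriv (coeff (m - Finsupp.single 0 1) p) else 0) = 0 := by
    split_ifs with h0
    · rw [h _ ?_, deriv_zero_fun]
      have := wdeg_sub_add (Finsupp.mem_support_iff.mp h0)
      omega
    · rfl
  rw [h1, zero_add]
  refine Finset.sum_eq_zero (fun i _ => ?_)
  split_ifs with h0
  · rw [h _ ?_, smul_zero]
    have h2 := wdeg_sub_add (Finsupp.mem_support_iff.mp h0)
    rw [wdeg_add, wdeg_single, one_mul]
    omega
  · rfl

lemma tf_hom (f : SF) : ∀ j m, wdeg m ≠ j → coeff m (Tf f j) = 0 := by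
  intro j
  induction j with
  | zero =>
    intro m hm
    rw [Tf, Function.iterate_zero_apply, coeff_C, if_neg]
    intro h0
    exact hm (h0 ▸ wdeg_zero)
  | succ j ih =>
    intro m hm
    rw [Tf, Function.iterate_succ_apply'] at *
    exact eneg1_hom ih m hm

lemma tf_vars (f : SF) (j : ℕ) : (Tf f j).vars ⊆ Finset.range j :=
  varsBound (tf_hom f j)

lemma tf_succ (f : SF) (j : ℕ) : Tf f (j + 1) = eneg1 (Tf f j) := by
  rw [Tf, Tf, Function.iterate_succ_apply']

lemma tf_zero (f : SF) : Tf f 0 = MvPolynomial.C f := rfl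

-- ## Fact 3 : coeff of u_j in T^{j+1} is f'

lemma tf_coeff_single (f : SF) : ∀ j, coeff (Finsupp.single j 1) (Tf f (j + 1)) = deriv f := by
  intro j
  induction j with
  | zero =>
    rw [tf_succ, coeff_eneg1 _ 0 (by rw [tf_zero, vars_C]; exact Finset.empty_subset _) _]
    rw [Finset.sum_range_zero, add_zero, if_pos (by simp)]
    rw [tsub_self, tf_zero]
    norm_num
  | succ j ih =>
    rw [tf_succ, coeff_eneg1 _ (j + 1) (tf_vars f (j+1)) _]
    have h1 : (0 : ℕ) ∉ (Finsupp.single (j+1) 1).support := by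
      simp [Finsupp.single_apply]
    rw [if_neg h1, zero_add]
    rw [Finset.sum_eq_single j]
    · rw [if_pos (by simp), tsub_self, zero_add]
      have : ((0 : ℕ →₀ ℕ)) j + 1 = 1 := by simp
      rw [this, one_smul, ih]
    · intro i _ hij
      rw [if_neg]
      simp only [Finsupp.mem_support_iff, Finsupp.single_apply]
      simp only [ne_eq, ite_eq_right_iff, Classical.not_imp]
      omega
    · intro hj
      exact absurd (Finset.mem_range.mpr (Nat.lt_succ_self j)) hj

-- ## Fact 4 : coeff of u_j u_0 in T^{j+2} is γ·f'' with γ ≥ 1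

lemma tf_coeff_pair (f : SF) : ∀ j, ∃ γ : ℝ, 1 ≤ γ ∧
    coeff (Finsupp.single j 1 + Finsupp.single 0 1) (Tf f (j + 2)) =
      γ • deriv (deriv f) := by
  intro j
  induction j with
  | zero =>
    refine ⟨1, le_refl 1, ?_⟩
    rw [tf_succ, coeff_eneg1 _ 1 (tf_vars f 1) _]
    rw [if_pos (by simp), add_tsub_cancel_right]
    rw [tf_coeff_single f 0]
    rw [Finset.sum_range_one, if_neg (by simp), add_zero, one_smul]
  | succ j ih =>
    obtain ⟨γ, hγ, hc⟩ := ih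
    set m : ℕ →₀ ℕ := Finsupp.single (j+1) 1 + Finsupp.single 0 1 with hm
    have hm0 : m 0 = 1 := by simp [hm, Finsupp.single_apply]
    have hmsub0 : m - Finsupp.single 0 1 = Finsupp.single (j+1) 1 :=
      add_tsub_cancel_right _ _
    have hmsubj : m - Finsupp.single (j+1) 1 = Finsupp.single 0 1 := by
      rw [hm, add_comm]
      exact add_tsub_cancel_right _ _
    refine ⟨((Finsupp.single 0 1 : ℕ →₀ ℕ) j + 1 : ℕ) * γ + 1, ?_, ?_⟩
    · have h1 : (1:ℝ) ≤ (((Finsupp.single 0 1 : ℕ →₀ ℕ) j + 1 : ℕ) : ℝ) := by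
        have : 1 ≤ (Finsupp.single 0 1 : ℕ →₀ ℕ) j + 1 := by omega
        exact_mod_cast this
      nlinarith
    · rw [tf_succ, coeff_eneg1 _ (j + 2) (tf_vars f (j+2)) _]
      rw [if_pos (Finsupp.mem_support_iff.mpr (by omega)), hmsub0, tf_coeff_single f (j+1)]
      rw [Finset.sum_eq_single j]
      · rw [if_pos (Finsupp.mem_support_iff.mpr (by simp [hm, Finsupp.single_apply]))]
        rw [hmsubj, add_comm (Finsupp.single 0 1) (Finsupp.single j 1), hc]
        have hsm : (((Finsupp.single 0 1 : ℕ →₀ ℕ) j + 1)) • (γ • deriv (deriv f)) =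
            ((((Finsupp.single 0 1 : ℕ →₀ ℕ) j + 1 : ℕ) : ℝ) * γ) • deriv (deriv f) := by
          rw [← Nat.cast_smul_eq_nsmul ℝ, smul_smul]
        rw [hsm, add_smul, one_smul, add_comm]
      · intro i _ hij
        rw [if_neg]
        simp only [Finsupp.mem_support_iff, hm, Finsupp.add_apply, Finsupp.single_apply,
          ne_eq, not_not]
        split_ifs <;> first | contradiction | omega
      · intro hj
        exact absurd (Finset.mem_range.mpr (by omega)) hj

-- ## decompositions of the monomial u_{d-2}·u_0

lemma single_decomp {ρ : ℕ →₀ ℕ} {a : ℕ} (ha : a ≠ 0)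
    (h0 : ∀ x, x ≠ 0 → x ≠ a → ρ x = 0) :
    ρ = Finsupp.single a (ρ a) + Finsupp.single 0 (ρ 0) := by
  ext x
  rcases eq_or_ne x 0 with rfl | hx0
  · simp [Finsupp.single_apply, ha]
  · rcases eq_or_ne x a with rfl | hxa
    · simp [Finsupp.single_apply, (Ne.symm hx0)]
    · simp [Finsupp.single_apply, h0 x hx0 hxa, Ne.symm hx0, Ne.symm hxa]

lemma single_decomp0 {ρ : ℕ →₀ ℕ} (h0 : ∀ x, x ≠ 0 → ρ x = 0) :
    ρ = Finsupp.single 0 (ρ 0) := by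
  ext x
  rcases eq_or_ne x 0 with rfl | hx0
  · simp
  · simp [Finsupp.single_apply, h0 x hx0, Ne.symm hx0]

lemma mu_cases {d : ℕ} (hd : 2 ≤ d) {μ ν : ℕ →₀ ℕ}
    (h : μ + ν = Finsupp.single (d - 2) 1 + Finsupp.single 0 1) :
    (μ = 0 ∧ ν = Finsupp.single (d - 2) 1 + Finsupp.single 0 1) ∨
    (μ = Finsupp.single 0 1 ∧ ν = Finsupp.single (d - 2) 1) ∨
    (μ = Finsupp.single (d - 2) 1 ∧ ν = Finsupp.single 0 1) ∨
    (μ = Finsupp.single (d - 2) 1 + Finsupp.single 0 1 ∧ ν = 0) := by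
  classical
  have key : ∀ x, μ x + ν x =
      (Finsupp.single (d - 2) 1 : ℕ →₀ ℕ) x + (Finsupp.single 0 1 : ℕ →₀ ℕ) x := by
    intro x
    rw [← Finsupp.add_apply, h, Finsupp.add_apply]
  by_cases hd2 : d - 2 = 0
  · -- d = 2 : target monomial is u_0²
    rw [hd2] at key ⊢
    have k0 : μ 0 + ν 0 = 2 := by have := key 0; simpa [Finsupp.single_apply] using this
    have kx : ∀ x, x ≠ 0 → μ x = 0 ∧ ν x = 0 := by
      intro x hx
      have := key x
      simp [Finsupp.single_apply, Ne.symm hx] at this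
      omega
    have hμ := single_decomp0 (fun x hx => (kx x hx).1)
    have hν := single_decomp0 (fun x hx => (kx x hx).2)
    have : μ 0 = 0 ∨ μ 0 = 1 ∨ μ 0 = 2 := by omega
    rcases this with h1 | h1 | h1
    · left
      constructor
      · rw [hμ, h1, Finsupp.single_zero]
      · rw [hν, show ν 0 = 2 by omega, show (2:ℕ) = 1 + 1 from rfl, Finsupp.single_add]
    · right; left
      constructor
      · rw [hμ, h1]
      · rw [hν, show ν 0 = 1 by omega]
    · right; right; right
      constructor
      · rw [hμ, h1, show (2:ℕ) = 1 + 1 from rfl, Finsupp.single_add]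
      · rw [hν, show ν 0 = 0 by omega, Finsupp.single_zero]
  · -- d ≥ 3
    have k0 : μ 0 + ν 0 = 1 := by
      have := key 0
      simpa [Finsupp.single_apply, hd2] using this
    have ka : μ (d-2) + ν (d-2) = 1 := by
      have := key (d-2)
      simpa [Finsupp.single_apply, hd2, show ¬(0 = d - 2) by omega] using this
    have kx : ∀ x, x ≠ 0 → x ≠ d - 2 → μ x = 0 ∧ ν x = 0 := by
      intro x hx0 hxa
      have := key x
      simp [Finsupp.single_apply, Ne.symm hx0, Ne.symm hxa] at this
      omega
    have hμ := single_decomp hd2 (fun x hx0 hxa => (kx x hx0 hxa).1)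
    have hν := single_decomp hd2 (fun x hx0 hxa => (kx x hx0 hxa).2)
    have c0 : μ 0 = 0 ∨ μ 0 = 1 := by omega
    have ca : μ (d-2) = 0 ∨ μ (d-2) = 1 := by omega
    rcases c0 with h1 | h1 <;> rcases ca with h2 | h2
    · left
      constructor
      · rw [hμ, h1, h2]; simp
      · rw [hν, show ν (d-2) = 1 by omega, show ν 0 = 1 by omega]
    · right; right; left
      constructor
      · rw [hμ, h1, h2]; simp
      · rw [hν, show ν (d-2) = 0 by omega, show ν 0 = 1 by omega]; simp
    · right; left
      constructor
      · rw [hμ, h1, h2]; simp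
      · rw [hν, show ν (d-2) = 1 by omega, show ν 0 = 0 by omega]; simp
    · right; right; right
      constructor
      · rw [hμ, h1, h2]
      · rw [hν, show ν (d-2) = 0 by omega, show ν 0 = 0 by omega]; simp

lemma algebraMap_SF_injective : Function.Injective (algebraMap ℝ SF) :=
  fun a b hab => congrFun hab 0

lemma coeff_constLift (m : ℕ →₀ ℕ) (P : MvPolynomial ℕ ℝ) :
    coeff m (constLift P) = (algebraMap ℝ SF) (coeff m P) :=
  coeff_map _ P m

lemma deriv_algebraMap (r : ℝ) : deriv ((algebraMap ℝ SF) r) = 0 := by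
  funext x
  show deriv (fun _ => r) x = 0
  simp


/-- Theorem 8.1: if f, f', f'' are linearly independent (f satisfies no linear
second order ODE), then for d ≥ 2 there is no weighted-homogeneous polynomial
P ∈ ℝ[u₀, ..., u_{d-1}] of weighted degree d, normalized so that the coefficient
of u_{d-1} is 1, satisfying Σ_j T^j·∂/∂u_j (Σ_i u_{i+1}·P_{u_i}) = f'·P. -/
theorem stmt14 (f : SF) (hf : ContDiff ℝ (⊤ : ℕ∞) f)
    (hli : LinearIndependent ℝ ![f, deriv f, deriv (deriv f)])
    (d : ℕ) (hd : 2 ≤ d) (P : MvPolynomial ℕ ℝ)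
    (hvars : P.vars ⊆ Finset.range d)
    (hhom : ∀ m ∈ P.support, wdeg m = d)
    (hnorm : MvPolynomial.coeff (Finsupp.single (d - 1) 1) P = 1)
    (heq : Ebar f (eneg1 (constLift P)) = MvPolynomial.C (deriv f) * constLift P) :
    False := by
  classical
  set τ : ℕ →₀ ℕ := Finsupp.single (d - 2) 1 + Finsupp.single 0 1 with hτ
  set bigQ : MvPolynomial ℕ ℝ := ∑ i ∈ P.vars, X (i + 1) * pderiv i P with hbigQ
  -- the lifted P is weighted homogeneous of degree d
  have hPhom : ∀ m, wdeg m ≠ d → coeff m (constLift P) = 0 := by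
    intro m hm
    rw [coeff_constLift]
    have : coeff m P = 0 := by
      by_contra h0
      exact hm (hhom m (MvPolynomial.mem_support_iff.mpr h0))
    rw [this, map_zero]
  -- du vanishes on constant-coefficient polynomials
  have hdu : du (constLift P) = 0 := by
    apply MvPolynomial.ext
    intro m
    rw [coeff_du, coeff_zero, coeff_constLift, deriv_algebraMap]
  -- e₋₁ (constLift P) = constLift bigQ
  have hQp : eneg1 (constLift P) = constLift bigQ := by
    rw [eneg1, hdu, mul_zero, zero_add, hbigQ, map_sum,
      show (constLift P).vars = P.vars from vars_map_of_injective _ algebraMap_SF_injective]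
    refine Finset.sum_congr rfl fun i _ => ?_
    rw [map_mul]
    congr 1
    · show X (i + 1) = MvPolynomial.map (algebraMap ℝ SF) (X (i + 1))
      rw [MvPolynomial.map_X]
    · show (pderiv i) (MvPolynomial.map (algebraMap ℝ SF) P) =
        MvPolynomial.map (algebraMap ℝ SF) ((pderiv i) P)
      exact pderiv_map
  -- homogeneity and vars bound for Q
  have hQhom : ∀ m, wdeg m ≠ d + 1 → coeff m (eneg1 (constLift P)) = 0 := eneg1_hom hPhom
  have hQvars : (eneg1 (constLift P)).vars ⊆ Finset.range (d + 1) := varsBound hQhom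
  -- expand Ebar as a sum over range (d+1)
  have hEb : Ebar f (eneg1 (constLift P)) =
      ∑ j ∈ Finset.range (d + 1), Tf f j * pderiv j (eneg1 (constLift P)) := by
    rw [Ebar]
    exact Finset.sum_subset hQvars fun j _ hj => by
      rw [pderiv_eq_zero_of_notMem_vars hj, mul_zero]
  have hD : ∀ (j : ℕ) (ν : ℕ →₀ ℕ),
      coeff ν (pderiv j (eneg1 (constLift P))) =
        (algebraMap ℝ SF) (coeff ν (pderiv j bigQ)) := by
    intro j ν
    rw [hQp]
    rw [show (pderiv j) (constLift bigQ) = MvPolynomial.map (algebraMap ℝ SF) ((pderiv j) bigQ)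
      from pderiv_map]
    exact coeff_map _ _ _
  -- the normalization gives coeff of u_d in bigQ equal to 1
  have hvarsd1 : d - 1 ∈ P.vars := by
    rw [mem_vars]
    refine ⟨Finsupp.single (d - 1) 1, MvPolynomial.mem_support_iff.mpr ?_, ?_⟩
    · rw [hnorm]; exact one_ne_zero
    · rw [Finsupp.mem_support_iff, Finsupp.single_apply, if_pos rfl]; exact one_ne_zero
  have hQed : coeff (Finsupp.single d 1) bigQ = 1 := by
    rw [hbigQ, coeff_sum]
    rw [Finset.sum_eq_single (d - 1)]
    · rw [show d - 1 + 1 = d from by omega, coeff_X_mul',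
        if_pos (Finsupp.mem_support_iff.mpr (by simp)), tsub_self, _root_.coeff_pderiv]
      simp [hnorm]
    · intro i _ hne
      rw [coeff_X_mul', if_neg]
      rw [Finsupp.mem_support_iff, Finsupp.single_apply]
      split_ifs with h <;> omega
    · intro h
      exact absurd hvarsd1 h
  have hc0Dd : coeff 0 (pderiv d (eneg1 (constLift P))) = 1 := by
    rw [hD d 0, _root_.coeff_pderiv]
    simp only [Finsupp.coe_zero, Pi.zero_apply, zero_add, one_smul, hQed, map_one]
  -- extract the coefficient of τ from the equation
  rw [hEb] at heq
  have hco := congrArg (coeff τ) heq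
  rw [coeff_sum, coeff_C_mul, coeff_constLift, mul_algebraMap] at hco
  set c : ℝ := coeff τ P with hc
  -- split the sum
  have hsub : ({0, d} : Finset ℕ) ⊆ Finset.range (d + 1) := by
    intro x hx
    simp only [Finset.mem_insert, Finset.mem_singleton] at hx
    rcases hx with rfl | rfl <;> simp [Finset.mem_range] <;> omega
  rw [← Finset.sum_sdiff hsub, Finset.sum_pair (show (0:ℕ) ≠ d by omega)] at hco
  -- the j = 0 term
  have hg0 : coeff τ (Tf f 0 * pderiv 0 (eneg1 (constLift P))) = (coeff τ (pderiv 0 bigQ)) • f := by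
    rw [tf_zero, coeff_C_mul, hD, mul_algebraMap]
  -- the j = d term
  obtain ⟨γ, hγ1, hγc⟩ := tf_coeff_pair f (d - 2)
  rw [show d - 2 + 2 = d from by omega] at hγc
  have hgd : coeff τ (Tf f d * pderiv d (eneg1 (constLift P))) = γ • deriv (deriv f) := by
    rw [coeff_mul]
    rw [Finset.sum_eq_single (τ, (0 : ℕ →₀ ℕ))]
    · rw [hγc, hc0Dd, mul_one]
    · rintro ⟨μ, ν⟩ hmem hne
      have hμν : μ + ν = τ := Finset.HasAntidiagonal.mem_antidiagonal.mp hmem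
      rcases mu_cases hd hμν with ⟨hμ, hν⟩ | ⟨hμ, hν⟩ | ⟨hμ, hν⟩ | ⟨hμ, hν⟩
      · rw [hμ, tf_hom f d 0 (by rw [wdeg_zero]; omega), zero_mul]
      · rw [hμ, tf_hom f d _ (by rw [wdeg_single]; omega), zero_mul]
      · rw [hμ, tf_hom f d _ (by rw [wdeg_single]; omega), zero_mul]
      · exact absurd (Prod.ext hμ hν) hne
    · intro h
      exact absurd (Finset.HasAntidiagonal.mem_antidiagonal.mpr (add_zero τ)) h
  -- the middle terms are multiples of f'
  have hmid : ∀ j ∈ Finset.range (d + 1) \ {0, d},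
      coeff τ (Tf f j * pderiv j (eneg1 (constLift P))) ∈ Submodule.span ℝ {deriv f} := by
    intro j hj
    have hj' : j ≠ 0 ∧ j ≠ d := by
      simp only [Finset.mem_sdiff, Finset.mem_insert, Finset.mem_singleton] at hj
      exact ⟨fun h => hj.2 (Or.inl h), fun h => hj.2 (Or.inr h)⟩
    rw [coeff_mul]
    refine Submodule.sum_mem _ ?_
    rintro ⟨μ, ν⟩ hmem
    have hμν : μ + ν = τ := Finset.HasAntidiagonal.mem_antidiagonal.mp hmem
    have hspan : ∀ r : ℝ, deriv f * (algebraMap ℝ SF) r ∈ Submodule.span ℝ {deriv f} := by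
      intro r
      rw [mul_algebraMap]
      exact Submodule.smul_mem _ r (Submodule.mem_span_singleton_self _)
    rcases mu_cases hd hμν with ⟨hμ, hν⟩ | ⟨hμ, hν⟩ | ⟨hμ, hν⟩ | ⟨hμ, hν⟩
    · rw [hμ, tf_hom f j 0 (by rw [wdeg_zero]; omega), zero_mul]
      exact Submodule.zero_mem _
    · by_cases hj1 : j = 1
      · subst hj1
        rw [hμ, show Tf f 1 = Tf f (0 + 1) from rfl, tf_coeff_single f 0, hD]
        exact hspan _
      · rw [hμ, tf_hom f j _ (by rw [wdeg_single]; omega), zero_mul]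
        exact Submodule.zero_mem _
    · by_cases hj1 : j = d - 1
      · subst hj1
        rw [hμ, show Tf f (d - 1) = Tf f (d - 2 + 1) from by rw [show d - 2 + 1 = d - 1 from by omega],
          tf_coeff_single f (d - 2), hD]
        exact hspan _
      · rw [hμ, tf_hom f j _ (by rw [wdeg_single]; omega), zero_mul]
        exact Submodule.zero_mem _
    · rw [hμ, tf_hom f j _ (by rw [wdeg_add, wdeg_single, wdeg_single]; omega), zero_mul]
      exact Submodule.zero_mem _
  obtain ⟨B, hB⟩ := Submodule.mem_span_singleton.mp
    (Submodule.sum_mem _ fun j hj => hmid j hj)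
  -- assemble the final linear relation
  rw [hg0, hgd, ← hB] at hco
  set A : ℝ := coeff τ (pderiv 0 bigQ) with hA
  have final : A • f + (B - c) • deriv f + γ • deriv (deriv f) = 0 := by
    rw [sub_smul]
    linear_combination (norm := module) hco
  have hli' := Fintype.linearIndependent_iff.mp hli ![A, B - c, γ] ?_
  · have := hli' 2
    simp only [Matrix.cons_val_two, Matrix.tail_cons, Matrix.head_cons] at this
    rw [this] at hγ1
    linarith
  · rw [Fin.sum_univ_three]
    simpa using final
end
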